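/- Define φ(x) = [(-40/46)∫₀ˣ(1-t)(1+t)⁴dt + 8∫₀ˣ(1-t)(1+t)²dt] / [(-40/46)(1+x)⁴ + 8(1+x)²] for x ∈ [0,2]. Then the denominator is strictly positive on [0,2], φ(0) = 0, φ(2) = 0, φ'(0) = 1, φ'(2) = -1, and φ(x) > 0 on (0,2). -/

import Mathlib

/-!
Writing `D x = (-40/46)(1+x)⁴ + 8(1+x)²`, the numerator of `φ` is `N x = ∫₀ˣ (1-t) D t dt`.
Since `D = (1+x)² (8 - (20/23)(1+x)²)` and `(1+x)² ≤ 9 < 46/5` on `[0,2]`, `D > 0` there, so the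
integrand is positive on `(0,1)` and negative on `(1,2)`; its total integral over `[0,2]` vanishes,
hence `N > 0` on `(0,2)`. At a zero `x` of `N` the quotient rule collapses to `(N/D)'(x) = N'(x)/D(x)
= 1 - x`, which gives the slopes `1` and `-1` at the endpoints.
-/

open Set intervalIntegral

theorem intervalIntegral_pos_of_pos_of_neg {f : ℝ → ℝ} {a m b x : ℝ}
    (hf : IntervalIntegrable f MeasureTheory.volume a b)
    (hpos : ∀ y ∈ Ioo a m, 0 < f y) (hneg : ∀ y ∈ Ioo m b, f y < 0)
    (htotal : ∫ t in a..b, f t = 0) (hx : x ∈ Ioo a b) :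
    0 < ∫ t in a..x, f t := by
  have hax : IntervalIntegrable f MeasureTheory.volume a x :=
    hf.mono_set (uIcc_subset_uIcc_left (Icc_subset_uIcc (Ioo_subset_Icc_self hx)))
  rcases le_or_gt x m with hxm | hmx
  · exact intervalIntegral_pos_of_pos_on hax (fun y hy => hpos y ⟨hy.1, hy.2.trans_le hxm⟩) hx.1
  · have hxb : IntervalIntegrable f MeasureTheory.volume x b :=
      hf.mono_set (uIcc_subset_uIcc_right (Icc_subset_uIcc (Ioo_subset_Icc_self hx)))
    have htail : 0 < ∫ t in x..b, -f t :=
      intervalIntegral_pos_of_pos_on hxb.neg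
        (fun y hy => neg_pos.2 (hneg y ⟨hmx.trans hy.1, hy.2⟩)) hx.2
    rw [integral_neg] at htail
    have hsplit := integral_interval_sub_left hf hax
    linarith

theorem HasDerivAt.div_of_eq_zero {𝕜 : Type*} [NontriviallyNormedField 𝕜] {N D : 𝕜 → 𝕜}
    {g x : 𝕜} (hN : HasDerivAt N (g * D x) x) (hNx : N x = 0) (hD : DifferentiableAt 𝕜 D x)
    (hDx : D x ≠ 0) : HasDerivAt (fun y => N y / D y) g x := by
  refine (hN.div hD.hasDerivAt hDx).congr_deriv ?_
  rw [hNx, zero_mul, sub_zero]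
  field_simp

theorem integral_one_sub_mul_one_add_pow (n : ℕ) (a b : ℝ) :
    ∫ t in a..b, (1 - t) * (1 + t) ^ n =
      2 * ((1 + b) ^ (n + 1) - (1 + a) ^ (n + 1)) / (n + 1) -
        ((1 + b) ^ (n + 2) - (1 + a) ^ (n + 2)) / (n + 2) := by
  have hsplit : (fun t : ℝ => (1 - t) * (1 + t) ^ n) =
      fun t => 2 * (1 + t) ^ n - (1 + t) ^ (n + 1) := by
    funext t; ring
  have hint (k : ℕ) : IntervalIntegrable (fun t : ℝ => (1 + t) ^ k) MeasureTheory.volume a b :=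
    (by fun_prop : Continuous fun t : ℝ => (1 + t) ^ k).intervalIntegrable a b
  rw [hsplit, integral_sub ((hint n).const_mul 2) (hint (n + 1)), integral_const_mul,
    integral_comp_add_left (fun t => t ^ n), integral_comp_add_left (fun t => t ^ (n + 1)),
    integral_pow, integral_pow]
  push_cast
  ring

noncomputable section

def calabiDenom (x : ℝ) : ℝ := (-40 / 46) * (1 + x) ^ 4 + 8 * (1 + x) ^ 2

def calabiNumer (x : ℝ) : ℝ := ∫ t in (0 : ℝ)..x, (1 - t) * calabiDenom t

end

theorem differentiable_calabiDenom : Differentiable ℝ calabiDenom := by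
  unfold calabiDenom; fun_prop

theorem calabiNumer_eq (x : ℝ) :
    calabiNumer x = (-40 / 46) * (∫ t in (0 : ℝ)..x, (1 - t) * (1 + t) ^ 4) +
      8 * (∫ t in (0 : ℝ)..x, (1 - t) * (1 + t) ^ 2) := by
  have hint (k : ℕ) : IntervalIntegrable (fun t : ℝ => (1 - t) * (1 + t) ^ k)
      MeasureTheory.volume 0 x :=
    (by fun_prop : Continuous fun t : ℝ => (1 - t) * (1 + t) ^ k).intervalIntegrable 0 x
  rw [← integral_const_mul, ← integral_const_mul,
    ← integral_add ((hint 4).const_mul _) ((hint 2).const_mul _)]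
  unfold calabiNumer calabiDenom
  congr 1
  funext t
  ring

theorem calabiDenom_pos {x : ℝ} (hx : x ∈ Icc (0 : ℝ) 2) : 0 < calabiDenom x := by
  obtain ⟨h0, h2⟩ := hx
  have hsq : (1 + x) ^ 2 ≤ 9 := by nlinarith
  have hfactor : calabiDenom x = (1 + x) ^ 2 * (8 - 20 / 23 * (1 + x) ^ 2) := by
    unfold calabiDenom; ring
  rw [hfactor]
  exact mul_pos (by positivity) (by linarith)

theorem calabiNumer_zero : calabiNumer 0 = 0 := integral_same

theorem calabiNumer_two : calabiNumer 2 = 0 := by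
  rw [calabiNumer_eq, integral_one_sub_mul_one_add_pow, integral_one_sub_mul_one_add_pow]
  norm_num

theorem calabiNumer_pos {x : ℝ} (hx : x ∈ Ioo (0 : ℝ) 2) : 0 < calabiNumer x := by
  have hD {y : ℝ} (hy : y ∈ Ioo (0 : ℝ) 2) : 0 < calabiDenom y :=
    calabiDenom_pos (Ioo_subset_Icc_self hy)
  refine intervalIntegral_pos_of_pos_of_neg (m := 1)
    (((continuous_const.sub continuous_id).mul differentiable_calabiDenom.continuous).intervalIntegrable 0 2)
    (fun y hy => mul_pos (by linarith [hy.2]) (hD ⟨hy.1, by linarith [hy.2]⟩))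
    (fun y hy => mul_neg_of_neg_of_pos (by linarith [hy.1]) (hD ⟨by linarith [hy.1], hy.2⟩))
    calabiNumer_two hx

theorem hasDerivAt_calabiNumer (x : ℝ) :
    HasDerivAt calabiNumer ((1 - x) * calabiDenom x) x :=
  ((continuous_const.sub continuous_id).mul differentiable_calabiDenom.continuous).integral_hasStrictDerivAt
    0 x |>.hasDerivAt

theorem hasDerivAt_calabiNumer_div_calabiDenom {x : ℝ} (hx : calabiNumer x = 0)
    (hxI : x ∈ Icc (0 : ℝ) 2) :
    HasDerivAt (fun y => calabiNumer y / calabiDenom y) (1 - x) x :=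
  (hasDerivAt_calabiNumer x).div_of_eq_zero hx differentiable_calabiDenom.differentiableAt
    (calabiDenom_pos hxI).ne'

theorem stmt_17 (φ : ℝ → ℝ)
    (hφ : ∀ x, φ x =
      ((-40 / 46) * (∫ t in (0:ℝ)..x, (1 - t) * (1 + t) ^ 4) +
          8 * (∫ t in (0:ℝ)..x, (1 - t) * (1 + t) ^ 2)) /
        ((-40 / 46) * (1 + x) ^ 4 + 8 * (1 + x) ^ 2)) :
    (∀ x ∈ Set.Icc (0:ℝ) 2, 0 < (-40 / 46) * (1 + x) ^ 4 + 8 * (1 + x) ^ 2) ∧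
      φ 0 = 0 ∧ φ 2 = 0 ∧ HasDerivAt φ 1 0 ∧ HasDerivAt φ (-1) 2 ∧
      ∀ x ∈ Set.Ioo (0:ℝ) 2, 0 < φ x := by
  have hφ' : φ = fun x => calabiNumer x / calabiDenom x := by
    funext x; rw [hφ x, calabiNumer_eq, calabiDenom]
  subst hφ'
  refine ⟨fun x hx => calabiDenom_pos hx, by simp [calabiNumer_zero], by simp [calabiNumer_two],
    ?_, ?_, fun x hx => div_pos (calabiNumer_pos hx) (calabiDenom_pos (Ioo_subset_Icc_self hx))⟩
  · simpa using hasDerivAt_calabiNumer_div_calabiDenom calabiNumer_zero (by norm_num)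
  · convert hasDerivAt_calabiNumer_div_calabiDenom calabiNumer_two (by norm_num) using 1
    norm_num
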